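/- arXiv:1411.2272 — 2 statements merged into one kernel-verified Lean document; each statement's English description precedes it below -/
import Mathlib

section
/- The polynomial 1 + x^3 + x^5 + x^8 cannot appear as a factor in any factorization ∏_{i=1}^m d_i(x) = ∑_{s=0}^{t} x^s where each d_i has coefficients in {0,1} and constant coefficient 1. -/
/-!
Split off the factor `d₃ = 1 + X³ + X⁵ + X⁸`: the sack is `q = d₃ * p` with `p` a product of
`0/1`-polynomials, so `p` has nonnegative coefficients. Since `d₃` has no terms of degree `1, 2, 4`,
`q₀ = p₀` and `q₂ = p₂`, while `q₅ = p₅ + p₂ + p₀ ≥ q₂ + q₀ = q₂ + 1`. But the coefficients of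
`1 + X + ⋯ + Xᵗ` are nonincreasing, so `q₅ ≤ q₂`.
-/

open Polynomial Finset

section OrderedSemiring

variable {R : Type*} [CommSemiring R] [PartialOrder R] [IsOrderedRing R]

theorem Polynomial.coeff_mul_nonneg {p q : R[X]} (hp : ∀ k, 0 ≤ p.coeff k)
    (hq : ∀ k, 0 ≤ q.coeff k) (k : ℕ) : 0 ≤ (p * q).coeff k := by
  rw [coeff_mul]
  exact sum_nonneg fun ab _ => mul_nonneg (hp ab.1) (hq ab.2)

theorem Polynomial.coeff_prod_nonneg {ι : Type*} (s : Finset ι) (f : ι → R[X])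
    (hf : ∀ i ∈ s, ∀ k, 0 ≤ (f i).coeff k) (k : ℕ) : 0 ≤ (∏ i ∈ s, f i).coeff k :=
  prod_induction f (fun p => ∀ k, 0 ≤ p.coeff k) (fun _ _ => coeff_mul_nonneg)
    (fun k => by rw [coeff_one]; split_ifs <;> simp) hf k

theorem Polynomial.coeff_geom_sum_X_antitone (n : ℕ) :
    Antitone fun k => (∑ s ∈ range n, (X : R[X]) ^ s).coeff k := by
  intro j k hjk
  simp only [finsetSum_coeff, coeff_X_pow, sum_ite_eq, mem_range]
  split_ifs <;> first | rfl | simp | omega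

end OrderedSemiring

theorem Polynomial.coeff_five_d3_mul {R : Type*} [CommSemiring R] (p : R[X]) :
    ((1 + X ^ 3 + X ^ 5 + X ^ 8) * p).coeff 5 =
      p.coeff 5 + ((1 + X ^ 3 + X ^ 5 + X ^ 8) * p).coeff 2 +
        ((1 + X ^ 3 + X ^ 5 + X ^ 8) * p).coeff 0 := by
  simp only [add_mul, one_mul, coeff_add, coeff_X_pow_mul']
  norm_num

theorem d3_not_in_fair_sack_general (m t : ℕ) (d : Fin m → ℝ[X])
    (hcoeff : ∀ i k, (d i).coeff k = 0 ∨ (d i).coeff k = 1)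
    (hprod : ∏ i, d i = ∑ s ∈ Finset.range (t + 1), (X : ℝ[X]) ^ s) :
    ∀ i, d i ≠ 1 + X ^ 3 + X ^ 5 + X ^ 8 := by
  intro i hi
  set q : ℝ[X] := ∑ s ∈ range (t + 1), X ^ s
  set p : ℝ[X] := ∏ j ∈ univ.erase i, d j
  have hq : q = (1 + X ^ 3 + X ^ 5 + X ^ 8) * p := by
    rw [← hprod, ← hi, mul_prod_erase _ _ (mem_univ i)]
  have hp : ∀ k, 0 ≤ p.coeff k :=
    coeff_prod_nonneg _ _ fun j _ k => (hcoeff j k).elim (·.ge) (·.symm ▸ zero_le_one)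
  have h5 := coeff_five_d3_mul p
  rw [← hq] at h5
  have hq0 : q.coeff 0 = 1 := by simp [q, finsetSum_coeff, coeff_X_pow]
  linarith [coeff_geom_sum_X_antitone (R := ℝ) (t + 1) (show 2 ≤ 5 by norm_num), hp 5]

theorem d3_not_in_fair_sack (m t : ℕ) (d : Fin m → ℝ[X])
    (hcoeff : ∀ i k, (d i).coeff k = 0 ∨ (d i).coeff k = 1)
    (h0 : ∀ i, (d i).coeff 0 = 1)
    (hprod : ∏ i, d i = ∑ s ∈ Finset.range (t + 1), (X : ℝ[X]) ^ s) :
    ∀ i, d i ≠ 1 + X ^ 3 + X ^ 5 + X ^ 8 :=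
  d3_not_in_fair_sack_general m t d hcoeff hprod
end

section
/- If d_1,...,d_m are polynomials with coefficients in {0,1}, constant coefficients 1, ∏ d_i = ∑_{s=0}^t x^s, and some d_i has degree n, then no other d_j has degree n (all degrees are distinct), given each d_i is palindromic (coefficient of x^j equals coefficient of x^{deg - j}). -/
/-!
Palindromicity and `d i (0) = 1` force every `d i` to be monic. If `d i` and `d j` both had
degree `n ≥ 1`, the terms `1 · x^n` and `x^n · 1` of `d i * d j` would give it an `x^n`
coefficient of at least `2`; since all coefficients are nonnegative and the remaining factors
have constant term `1`, the whole product would too, while every coefficient of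
`1 + x + ⋯ + x^t` is at most `1`.
-/

open Polynomial Finset

namespace Polynomial

section NonnegCoeff

variable {R : Type*} [CommSemiring R] [PartialOrder R] [IsOrderedRing R] {p q : R[X]}

theorem coeff_mul_nonneg_s16 (hp : ∀ k, 0 ≤ p.coeff k) (hq : ∀ k, 0 ≤ q.coeff k) (k : ℕ) :
    0 ≤ (p * q).coeff k := by
  rw [coeff_mul]
  exact sum_nonneg fun _ _ => mul_nonneg (hp _) (hq _)

theorem coeff_prod_nonneg_s16 {ι : Type*} (s : Finset ι) (f : ι → R[X])
    (h : ∀ i ∈ s, ∀ k, 0 ≤ (f i).coeff k) : ∀ k, 0 ≤ (∏ i ∈ s, f i).coeff k :=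
  prod_induction f (fun P => ∀ k, 0 ≤ P.coeff k) (fun _ _ => coeff_mul_nonneg_s16)
    (fun k => by rw [coeff_one]; split_ifs <;> simp) h

theorem coeff_mul_coeff_le_coeff_mul (hp : ∀ k, 0 ≤ p.coeff k) (hq : ∀ k, 0 ≤ q.coeff k)
    (a b : ℕ) : p.coeff a * q.coeff b ≤ (p * q).coeff (a + b) := by
  rw [coeff_mul]
  exact single_le_sum (f := fun x : ℕ × ℕ => p.coeff x.1 * q.coeff x.2)
    (fun _ _ => mul_nonneg (hp _) (hq _)) (a := (a, b)) (mem_antidiagonal.mpr rfl)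

theorem coeff_zero_mul_add_mul_coeff_zero_le (hp : ∀ k, 0 ≤ p.coeff k)
    (hq : ∀ k, 0 ≤ q.coeff k) {n : ℕ} (hn : n ≠ 0) :
    p.coeff 0 * q.coeff n + p.coeff n * q.coeff 0 ≤ (p * q).coeff n := by
  have hne : ((0 : ℕ), n) ≠ (n, 0) := by simp [Prod.ext_iff, hn.symm]
  rw [coeff_mul, ← sum_pair hne (f := fun x : ℕ × ℕ => p.coeff x.1 * q.coeff x.2)]
  refine sum_le_sum_of_subset_of_nonneg ?_ fun _ _ _ => mul_nonneg (hp _) (hq _)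
  simp [insert_subset_iff]

end NonnegCoeff

theorem coeff_geom_sum_X_le_one {R : Type*} [Semiring R] [PartialOrder R] [ZeroLEOneClass R]
    (N n : ℕ) : (∑ s ∈ range N, (X : R[X]) ^ s).coeff n ≤ 1 := by
  rw [finsetSum_coeff]
  simp only [coeff_X_pow, sum_ite_eq]
  split_ifs <;> simp

end Polynomial

theorem distinct_degrees (m t : ℕ) (d : Fin m → ℝ[X])
    (hcoeff : ∀ i k, (d i).coeff k = 0 ∨ (d i).coeff k = 1)
    (h0 : ∀ i, (d i).coeff 0 = 1)
    (hpal : ∀ i j, j ≤ (d i).natDegree →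
      (d i).coeff j = (d i).coeff ((d i).natDegree - j))
    (hprod : ∏ i, d i = ∑ s ∈ Finset.range (t + 1), (X : ℝ[X]) ^ s) :
    ∀ i j, i ≠ j → 1 ≤ (d i).natDegree → (d i).natDegree ≠ (d j).natDegree := by
  intro i j hij hdeg heq
  set n := (d i).natDegree
  have hnonneg : ∀ k l, 0 ≤ (d k).coeff l := fun k l => by
    rcases hcoeff k l with h | h <;> simp [h]
  have hmonic : ∀ k, (d k).coeff (d k).natDegree = 1 := fun k => by
    simpa [h0] using (hpal k 0 (Nat.zero_le _)).symm
  set rest := ∏ k ∈ (univ.erase i).erase j, d k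
  have hsplit : ∏ k, d k = d i * d j * rest := by
    rw [mul_assoc, mul_prod_erase _ _ (by simpa using hij.symm), mul_prod_erase _ _ (mem_univ i)]
  have hrest : rest.coeff 0 = 1 := by simp [rest, coeff_zero_prod, h0]
  have hpair : 2 ≤ (d i * d j).coeff n := by
    have hdj : (d j).coeff n = 1 := heq ▸ hmonic j
    have hterms := coeff_zero_mul_add_mul_coeff_zero_le (hnonneg i) (hnonneg j) (n := n) (by omega)
    rw [h0, h0, hmonic, hdj] at hterms
    linarith
  have two_le_one : (2 : ℝ) ≤ 1 := calc
    2 ≤ (d i * d j).coeff n * rest.coeff 0 := by rwa [hrest, mul_one]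
    _ ≤ (∏ k, d k).coeff n := hsplit ▸ coeff_mul_coeff_le_coeff_mul
      (coeff_mul_nonneg_s16 (hnonneg i) (hnonneg j)) (coeff_prod_nonneg_s16 _ _ fun k _ => hnonneg k) n 0
    _ ≤ 1 := hprod ▸ coeff_geom_sum_X_le_one _ _
  norm_num at two_le_one
end
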